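/- For every j ∈ ℝ, the fiber of the momentum map of the symmetric quadratic spherical pendulum over the boundary value (j, j²/2) is a circle; explicitly, {p ∈ S : F(p) = (j, j²/2)} = {(cos θ, sin θ, 0, −j sin θ, j cos θ, 0) : θ ∈ ℝ}. -/
import Mathlib


open Real

/-- `T*S²` embedded in ℝ⁶: `x² + y² + z² = 1` and `xu + yv + zw = 0`. -/
def TstarSphere : Set (Fin 6 → ℝ) :=
  {p | p 0 ^ 2 + p 1 ^ 2 + p 2 ^ 2 = 1 ∧
       p 0 * p 3 + p 1 * p 4 + p 2 * p 5 = 0}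

/-- The momentum map `F = (J, H)` of the symmetric quadratic spherical pendulum:
`J = xv - yu` and `H = (u² + v² + w²)/2 + z²`. -/
noncomputable def Fmap (p : Fin 6 → ℝ) : ℝ × ℝ :=
  (p 0 * p 4 - p 1 * p 3, (p 3 ^ 2 + p 4 ^ 2 + p 5 ^ 2) / 2 + p 2 ^ 2)

/-- Existence of an angle for a point on the unit circle. -/
lemma exists_angle (x y : ℝ) (h : x ^ 2 + y ^ 2 = 1) :
    ∃ θ : ℝ, Real.cos θ = x ∧ Real.sin θ = y := by
  have hx1 : -1 ≤ x := by nlinarith [sq_nonneg y]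
  have hx2 : x ≤ 1 := by nlinarith [sq_nonneg y]
  have hs : Real.sin (Real.arccos x) = |y| := by
    rw [Real.sin_arccos]
    have : 1 - x ^ 2 = y ^ 2 := by linarith
    rw [this, Real.sqrt_sq_eq_abs]
  rcases le_or_gt 0 y with hy | hy
  · exact ⟨Real.arccos x, Real.cos_arccos hx1 hx2, by rw [hs, abs_of_nonneg hy]⟩
  · refine ⟨-Real.arccos x, ?_, ?_⟩
    · rw [Real.cos_neg]; exact Real.cos_arccos hx1 hx2
    · rw [Real.sin_neg, hs, abs_of_neg hy, neg_neg]

/-- for every `j`, the fiber of the momentum map over the boundary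
value `(j, j²/2)` is the circle
`{(cos θ, sin θ, 0, -j sin θ, j cos θ, 0) : θ ∈ ℝ}`. -/
theorem boundary_fiber_is_circle (j : ℝ) :
    {p : Fin 6 → ℝ | p ∈ TstarSphere ∧ Fmap p = (j, j ^ 2 / 2)} =
      {p : Fin 6 → ℝ | ∃ θ : ℝ,
        p = ![Real.cos θ, Real.sin θ, 0,
              -j * Real.sin θ, j * Real.cos θ, 0]} := by
  ext p
  simp only [Set.mem_setOf_eq, TstarSphere, Fmap, Prod.mk.injEq]
  constructor
  · rintro ⟨⟨hx, hxu⟩, hJ, hH⟩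
    -- key identity: 2z²(1-z²) + w² + j²z² = 0
    have key : 2 * (p 2) ^ 2 - 2 * (p 2) ^ 4 + (p 5) ^ 2 + j ^ 2 * (p 2) ^ 2 = 0 := by
      linear_combination (p 3 ^ 2 + p 4 ^ 2) * hx + 2 * (1 - p 2 ^ 2) * hH
        - (p 0 * p 4 - p 1 * p 3 + j) * hJ - (p 0 * p 3 + p 1 * p 4 - p 2 * p 5) * hxu
    have hz2le : (p 2) ^ 2 ≤ 1 := by nlinarith [sq_nonneg (p 0), sq_nonneg (p 1)]
    have hw : p 5 = 0 := by
      have h5 : (p 5) ^ 2 ≤ 0 := by nlinarith [sq_nonneg (p 2)]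
      have := sq_nonneg (p 5)
      have : (p 5) ^ 2 = 0 := le_antisymm h5 this
      exact pow_eq_zero_iff (by norm_num) |>.mp this
    have hj2 : 2 * (p 2) ^ 2 ≤ j ^ 2 := by
      nlinarith [sq_nonneg (p 3), sq_nonneg (p 4), sq_nonneg (p 5)]
    have hz : p 2 = 0 := by
      have hmul : (j ^ 2 - 2 * (p 2) ^ 2) * (p 2) ^ 2 ≥ 0 :=
        mul_nonneg (by linarith) (sq_nonneg _)
      have h2 : (p 2) ^ 2 ≤ 0 := by nlinarith [hw]
      have : (p 2) ^ 2 = 0 := le_antisymm h2 (sq_nonneg _)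
      exact pow_eq_zero_iff (by norm_num) |>.mp this
    have hu : p 3 = -j * p 1 := by
      linear_combination (p 0) * hxu - (p 1) * hJ - (p 3) * hx
        + (p 3 * p 2 - p 0 * p 5) * hz
    have hv : p 4 = j * p 0 := by
      linear_combination (p 1) * hxu + (p 0) * hJ - (p 4) * hx
        + (p 4 * p 2 - p 1 * p 5) * hz
    have hxy : (p 0) ^ 2 + (p 1) ^ 2 = 1 := by
      rw [hz] at hx; linarith [hx]
    obtain ⟨θ, hc, hs⟩ := exists_angle (p 0) (p 1) hxy
    refine ⟨θ, ?_⟩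
    funext i
    fin_cases i <;>
      simp [Matrix.cons_val_zero, Matrix.cons_val_one, Matrix.cons_val_succ,
        hc, hs, hz, hw, hu, hv] <;> try rfl
  · rintro ⟨θ, rfl⟩
    have hsc := Real.sin_sq_add_cos_sq θ
    refine ⟨⟨?_, ?_⟩, ?_, ?_⟩
    · show Real.cos θ ^ 2 + Real.sin θ ^ 2 + (0 : ℝ) ^ 2 = 1
      linear_combination hsc
    · show Real.cos θ * (-j * Real.sin θ) + Real.sin θ * (j * Real.cos θ)
        + (0 : ℝ) * 0 = 0
      ring
    · show Real.cos θ * (j * Real.cos θ) - Real.sin θ * (-j * Real.sin θ) = j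
      linear_combination j * hsc
    · show ((-j * Real.sin θ) ^ 2 + (j * Real.cos θ) ^ 2 + (0 : ℝ) ^ 2) / 2
        + (0 : ℝ) ^ 2 = j ^ 2 / 2
      linear_combination (j ^ 2 / 2) * hsc
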